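/- Let m and n be integers with m ≥ 5 and 1 ≤ n ≤ m − 3. Then the bipartite achievement number of the disjoint union of a star and a matching satisfies m + n ≤ ba(K_{1,m} ∪ nK_2) ≤ 2m − 2. -/

import Mathlib

/-!
Lower bound: a winning blue copy of `K_{1,m} ∪ nK₂` lies in `K_{N,N}`, where the `m` leaves and
one endpoint of each matching edge are distinct neighbours of the center, so `m + n ≤ N`.

Upper bound: Alice plays an edge `v₀w₀`, then grows a star at the endpoint `c` missed by Bob's
first edge; `c` has `2m - 2` neighbours and at most `2j - 1` edges at `c` are colored before her
`(j+1)`-st move, so this succeeds. She then adds `n` edges avoiding all her earlier vertices: she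
has used at most `n` vertices on one side and `m + n - 1` on the other, leaving at least
`(m + 1) · 2 > m + n - 1` fresh edges, more than Bob has colored. Her copy is complete at her
`(m + n)`-th move, when Bob has colored only `m + n - 1` edges, too few for a copy.
-/

namespace AchievementGame

/-- A strategy for the achievement game: given the history of all moves played so far
(earliest first), produce the next move (an edge, i.e. an element of `Sym2`). -/
def Strategy (α : Type*) : Type _ := List (Sym2 α) → Sym2 α

/-- A strategy is valid for the host graph `G` if, whenever some edge of `G` is still
uncolored, it chooses an uncolored edge of `G`. -/
def Strategy.Valid {α : Type*} (G : SimpleGraph α) (s : Strategy α) : Prop :=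
  ∀ l : List (Sym2 α), (∃ e ∈ G.edgeSet, e ∉ l) → s l ∈ G.edgeSet ∧ s l ∉ l

/-- The history of the first `n` moves when Alice plays strategy `σ` and Bob plays
strategy `τ`; Alice moves first and the players alternate. -/
def hist {α : Type*} (σ τ : Strategy α) : ℕ → List (Sym2 α)
  | 0 => []
  | n + 1 => hist σ τ n ++ [(if n % 2 = 0 then σ else τ) (hist σ τ n)]

/-- The `n`-th move (0-indexed): even indices are Alice's (blue) moves,
odd indices are Bob's (red) moves. -/
def move {α : Type*} (σ τ : Strategy α) (n : ℕ) : Sym2 α :=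
  (if n % 2 = 0 then σ else τ) (hist σ τ n)

/-- The set `s` of edges contains a copy of the graph `F`. -/
def HasCopy {α β : Type*} (F : SimpleGraph β) (s : Set (Sym2 α)) : Prop :=
  ∃ f : β ↪ α, ∀ a b, F.Adj a b → s(f a, f b) ∈ s

/-- Alice has a winning strategy in the achievement game `(F, G, +)`: Alice has a valid
strategy such that against every valid strategy of Bob, at some legal move of Alice
(her `(k+1)`-st move, which exists since `2k+1 ≤ |E(G)|`) the blue edges contain a copy
of `F`, while the red edges played strictly before do not. -/
def AliceWins {α β : Type*} (F : SimpleGraph β) (G : SimpleGraph α) : Prop :=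
  ∃ σ : Strategy α, Strategy.Valid G σ ∧ ∀ τ : Strategy α, Strategy.Valid G τ →
    ∃ k : ℕ, 2 * k + 1 ≤ G.edgeSet.ncard ∧
      HasCopy F {e | ∃ i ≤ k, e = move σ τ (2 * i)} ∧
      ¬ HasCopy F {e | ∃ i < k, e = move σ τ (2 * i + 1)}

/-- The matching `mK₂` consisting of `m` pairwise disjoint edges. -/
def matching (m : ℕ) : SimpleGraph (Fin m ⊕ Fin m) :=
  SimpleGraph.fromRel (fun a b => ∃ i, a = Sum.inl i ∧ b = Sum.inr i)

/-- The star `K_{1,m}`: the center `0` joined to `m` leaves. -/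
def star (m : ℕ) : SimpleGraph (Fin (m + 1)) :=
  SimpleGraph.fromRel (fun a _ => a = 0)

/-- The double star `S_{m,n}`: disjoint stars `K_{1,m}` and `K_{1,n}` with an edge
joining their centers `Sum.inl 0` and `Sum.inr 0`. -/
def doubleStar (m n : ℕ) : SimpleGraph (Fin (m + 1) ⊕ Fin (n + 1)) :=
  SimpleGraph.fromRel (fun a b =>
    (a = Sum.inl 0 ∧ ∃ i, b = Sum.inl i) ∨
    (a = Sum.inr 0 ∧ ∃ j, b = Sum.inr j) ∨
    (a = Sum.inl 0 ∧ b = Sum.inr 0))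

/-- The disjoint union `K_{1,m} ∪ nK₂` of a star and a matching. -/
def starMatching (m n : ℕ) : SimpleGraph (Fin (m + 1) ⊕ (Fin n ⊕ Fin n)) :=
  SimpleGraph.fromRel (fun a b =>
    (a = Sum.inl 0 ∧ ∃ i, b = Sum.inl i) ∨
    (∃ i, a = Sum.inr (Sum.inl i) ∧ b = Sum.inr (Sum.inr i)))

open Function Finset

section Play

variable {α : Type*} {G : SimpleGraph α}

open scoped Classical in
noncomputable def Strategy.greedy (G : SimpleGraph α) (P : List (Sym2 α) → Sym2 α → Prop)
    (d : Sym2 α) : Strategy α := fun l =>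
  if h : ∃ e ∈ G.edgeSet, e ∉ l ∧ P l e then h.choose
  else if h : ∃ e ∈ G.edgeSet, e ∉ l then h.choose else d

theorem Strategy.greedy_spec {P : List (Sym2 α) → Sym2 α → Prop} {d : Sym2 α}
    {l : List (Sym2 α)} (h : ∃ e ∈ G.edgeSet, e ∉ l ∧ P l e) :
    P l (Strategy.greedy G P d l) := by
  rw [Strategy.greedy, dif_pos h]
  exact h.choose_spec.2.2

theorem Strategy.greedy_valid (P : List (Sym2 α) → Sym2 α → Prop) (d : Sym2 α) :
    (Strategy.greedy G P d).Valid G := by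
  intro l hl
  unfold Strategy.greedy
  split_ifs with h
  · exact ⟨h.choose_spec.1, h.choose_spec.2.1⟩
  · exact hl.choose_spec

variable {σ τ : Strategy α}

theorem hist_eq_map (σ τ : Strategy α) (k : ℕ) :
    hist σ τ k = (List.range k).map (move σ τ) := by
  induction k with
  | zero => rfl
  | succ k ih => rw [hist, List.range_succ, List.map_append, ← ih]; rfl

@[simp]
theorem length_hist (σ τ : Strategy α) (k : ℕ) : (hist σ τ k).length = k := by
  simp [hist_eq_map]

theorem getElem?_hist {i k : ℕ} (h : i < k) : (hist σ τ k)[i]? = some (move σ τ i) := by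
  simp [hist_eq_map, List.getElem?_range h]

theorem mem_hist {e : Sym2 α} {k : ℕ} : e ∈ hist σ τ k ↔ ∃ i < k, move σ τ i = e := by
  simp [hist_eq_map]

theorem move_two_mul (j : ℕ) : move σ τ (2 * j) = σ (hist σ τ (2 * j)) := by
  simp [move]

theorem exists_mem_edgeSet_notMem {l : List (Sym2 α)} (hl : l.length < G.edgeSet.ncard) :
    ∃ e ∈ G.edgeSet, e ∉ l := by
  classical
  by_contra! h
  have := Set.ncard_le_ncard (fun e he => List.mem_toFinset.2 (h e he)) l.toFinset.finite_toSet
  rw [Set.ncard_coe_finset] at this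
  exact (this.trans l.toFinset_card_le).not_gt hl

theorem move_mem_edgeSet_notMem_hist (hσ : σ.Valid G) (hτ : τ.Valid G) {i : ℕ}
    (hi : i < G.edgeSet.ncard) : move σ τ i ∈ G.edgeSet ∧ move σ τ i ∉ hist σ τ i := by
  have hfree := exists_mem_edgeSet_notMem (l := hist σ τ i) (by simpa using hi)
  unfold move
  split_ifs
  exacts [hσ _ hfree, hτ _ hfree]

theorem move_mem_edgeSet (hσ : σ.Valid G) (hτ : τ.Valid G) {i : ℕ}
    (hi : i < G.edgeSet.ncard) : move σ τ i ∈ G.edgeSet :=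
  (move_mem_edgeSet_notMem_hist hσ hτ hi).1

theorem move_injOn (hσ : σ.Valid G) (hτ : τ.Valid G) :
    Set.InjOn (move σ τ) (Set.Iio G.edgeSet.ncard) := by
  intro i hi j hj hij
  by_contra hne
  wlog hlt : i < j generalizing i j
  · exact this hj hi hij.symm (Ne.symm hne) (by omega)
  exact (move_mem_edgeSet_notMem_hist hσ hτ hj).2 (mem_hist.2 ⟨i, hlt, hij⟩)

end Play

section Copies

variable {α β : Type*} {F : SimpleGraph β}

theorem HasCopy.mono {s t : Set (Sym2 α)} (h : HasCopy F s) (hst : s ⊆ t) : HasCopy F t :=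
  let ⟨f, hf⟩ := h
  ⟨f, fun a b hab => hst (hf a b hab)⟩

theorem HasCopy.ncard_edgeSet_le {s : Finset (Sym2 α)} (h : HasCopy F (s : Set (Sym2 α))) :
    F.edgeSet.ncard ≤ s.card := by
  obtain ⟨f, hf⟩ := h
  rw [← Set.ncard_coe_finset]
  refine Set.ncard_le_ncard_of_injOn (Sym2.map f) ?_ (Sym2.map.injective f.injective).injOn
  intro e he
  induction e using Sym2.ind with
  | _ a b => exact hf a b he

theorem AliceWins.hasCopy_edgeSet {G : SimpleGraph α} (h : AliceWins F G) :
    HasCopy F G.edgeSet := by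
  obtain ⟨σ, hσ, hwin⟩ := h
  have hτ := Strategy.greedy_valid (G := G) (fun _ _ => True) (σ [])
  obtain ⟨k, hk, hcopy, -⟩ := hwin _ hτ
  refine hcopy.mono ?_
  rintro _ ⟨i, hi, rfl⟩
  exact move_mem_edgeSet hσ hτ (by omega)

end Copies

section StarMatching

variable {α : Type*} {m n : ℕ}

theorem starMatching_adj_inl (i : Fin m) :
    (starMatching m n).Adj (.inl 0) (.inl i.succ) := by
  simp [starMatching, (Fin.succ_ne_zero i).symm]

theorem starMatching_adj_inr (j : Fin n) :
    (starMatching m n).Adj (.inr (.inl j)) (.inr (.inr j)) := by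
  simp [starMatching]

theorem hasCopy_starMatching {s : Set (Sym2 α)} (c : α) (leaf : Fin m → α) (p q : Fin n → α)
    (hinj : Injective (Sum.elim (Fin.cons c leaf : Fin (m + 1) → α) (Sum.elim p q)))
    (hleaf : ∀ i, s(c, leaf i) ∈ s) (hpq : ∀ j, s(p j, q j) ∈ s) :
    HasCopy (starMatching m n) s := by
  refine ⟨⟨_, hinj⟩, fun a b hab => ?_⟩
  rw [starMatching, SimpleGraph.fromRel_adj] at hab
  obtain ⟨hne, (⟨rfl, i, rfl⟩ | ⟨j, rfl, rfl⟩) | (⟨rfl, i, rfl⟩ | ⟨j, rfl, rfl⟩)⟩ := hab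
  · obtain ⟨k, rfl⟩ := Fin.exists_succ_eq.2 (show i ≠ 0 by rintro rfl; exact hne rfl)
    simpa using hleaf k
  · simpa using hpq j
  · obtain ⟨k, rfl⟩ := Fin.exists_succ_eq.2 (show i ≠ 0 by rintro rfl; exact hne rfl)
    simpa [Sym2.eq_swap] using hleaf k
  · simpa [Sym2.eq_swap] using hpq j

theorem add_le_ncard_edgeSet_starMatching : m + n ≤ (starMatching m n).edgeSet.ncard := by
  let e : Fin m ⊕ Fin n → Sym2 (Fin (m + 1) ⊕ (Fin n ⊕ Fin n)) :=
    Sum.elim (fun i => s(.inl 0, .inl i.succ)) (fun j => s(.inr (.inl j), .inr (.inr j)))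
  have he : Injective e := by
    rintro (i | j) (i' | j') h <;> simp_all [e]
  calc m + n = (Set.univ : Set (Fin m ⊕ Fin n)).ncard := by simp
    _ ≤ _ := Set.ncard_le_ncard_of_injOn e
      (by rintro (i | j) -; exacts [starMatching_adj_inl i, starMatching_adj_inr j])
      he.injOn (Set.toFinite _)

theorem exists_add_le_ncard_neighborSet_of_hasCopy [Finite α] {G : SimpleGraph α}
    (hG : ∀ c a b, G.Adj a b → G.Adj c a ∨ G.Adj c b)
    (h : HasCopy (starMatching m n) G.edgeSet) : ∃ c, m + n ≤ (G.neighborSet c).ncard := by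
  classical
  obtain ⟨f, hf⟩ := h
  let c := f (.inl 0)
  let pick : Fin m ⊕ Fin n → Fin (m + 1) ⊕ (Fin n ⊕ Fin n) :=
    Sum.elim (fun i => .inl i.succ)
      (fun j => .inr (if G.Adj c (f (.inr (.inl j))) then .inl j else .inr j))
  have hpick : Injective pick := by
    rintro (i | j) (i' | j') h <;> simp only [pick, Sum.elim_inl, Sum.elim_inr] at h <;>
      (try split_ifs at h) <;> simp_all
  refine ⟨c, ?_⟩
  calc m + n = (Set.univ : Set (Fin m ⊕ Fin n)).ncard := by simp
    _ ≤ _ := Set.ncard_le_ncard_of_injOn (f ∘ pick) ?_ (f.injective.comp hpick).injOn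
      (Set.toFinite _)
  rintro (i | j) -
  · exact hf _ _ (starMatching_adj_inl i)
  · have hpq : G.Adj (f (.inr (.inl j))) (f (.inr (.inr j))) := hf _ _ (starMatching_adj_inr j)
    simp only [comp_apply, pick, Sum.elim_inr, SimpleGraph.mem_neighborSet]
    split_ifs with hp
    · exact hp
    · exact (hG c _ _ hpq).resolve_left hp

theorem hasCopy_starMatching_of_edges (a : ℕ → Sym2 α) (c : α) (hm : 0 < m)
    (hdiag : ∀ i < m + n, ¬ (a i).IsDiag) (hinj : Set.InjOn a (Set.Iio m))
    (hc : ∀ i < m, c ∈ a i) (hfresh : ∀ j < m + n, m ≤ j → ∀ u ∈ a j, ∀ i < j, u ∉ a i) :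
    HasCopy (starMatching m n) {e | ∃ i < m + n, e = a i} := by
  have hsame : ∀ j < m + n, ∀ j' < m + n, m ≤ j → m ≤ j' → ∀ u ∈ a j, u ∈ a j' → j = j' := by
    intro j hj j' hj' hmj hmj' u hu hu'
    rcases lt_trichotomy j j' with h | h | h
    exacts [(hfresh j' hj' hmj' u hu' j h hu).elim, h, (hfresh j hj hmj u hu j' h hu').elim]
  let leaf : Fin m → α := fun i => Sym2.Mem.other (hc i i.2)
  have hleaf : ∀ i : Fin m, s(c, leaf i) = a i := fun i => Sym2.other_spec _
  choose p q hpq using fun j : Fin n =>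
    Sym2.ind (f := fun e => ∃ x y, s(x, y) = e) (fun x y => ⟨x, y, rfl⟩) (a (m + j))
  let row : Fin n ⊕ Fin n → Fin n := Sum.elim id id
  have hrow : ∀ y, Sum.elim p q y ∈ a (m + row y) := by
    rintro (j | j) <;> simp [row, ← hpq j]
  have hstar : ∀ x : Fin (m + 1), ∃ i < m, (Fin.cons c leaf : Fin (m + 1) → α) x ∈ a i := by
    refine Fin.cases ⟨0, hm, hc 0 hm⟩ fun i => ⟨i, i.2, ?_⟩
    simp [← hleaf i]
  refine hasCopy_starMatching c leaf p q ?_ (fun i => ⟨i, by omega, hleaf i⟩)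
    (fun j => ⟨m + j, by omega, hpq j⟩)
  refine Injective.sumElim ?_ ?_ fun x y hxy => ?_
  · refine Fin.cons_injective_iff.2 ⟨?_, fun i i' h => Fin.ext (hinj i.2 i'.2 ?_)⟩
    · rintro ⟨i, hi⟩
      exact hdiag i (by omega) (hleaf i ▸ Sym2.mk_isDiag_iff.2 hi.symm)
    · rw [← hleaf, ← hleaf, h]
  · intro y y' h
    have hyy' : row y = row y' := Fin.ext <| by
      have := hsame _ (by omega) _ (by omega) (by omega) (by omega) _ (hrow y) (h ▸ hrow y')
      omega
    rcases y with j | j <;> rcases y' with j' | j' <;> simp only [row, Sum.elim_inl,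
      Sum.elim_inr, id] at hyy' h <;> subst hyy'
    all_goals first
      | rfl
      | exact (hdiag (m + j) (by omega) (by rw [← hpq j]; exact Sym2.mk_isDiag_iff.2 h)).elim
      | exact (hdiag (m + j) (by omega) (by rw [← hpq j]; exact Sym2.mk_isDiag_iff.2 h.symm)).elim
  · obtain ⟨i, hi, hx⟩ := hstar x
    exact hfresh _ (by omega) (by omega) _ (hrow y) i (by omega) (hxy ▸ hx)

end StarMatching

section Neighbors

variable {α : Type*} {G : SimpleGraph α}

theorem exists_adj_notMem {c : α} {b : Sym2 α} {l : List (Sym2 α)} (hb : b ∈ l) (hcb : c ∉ b)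
    (hl : l.length ≤ (G.neighborSet c).ncard) : ∃ w, G.Adj c w ∧ s(c, w) ∉ l := by
  classical
  by_contra! h
  have hle : (G.neighborSet c).ncard ≤ #(l.toFinset.erase b) := by
    rw [← Set.ncard_coe_finset]
    refine Set.ncard_le_ncard_of_injOn (fun w => s(c, w)) (fun w hw => ?_)
      (fun w _ w' _ hww' => Sym2.congr_right.1 hww') (Finset.finite_toSet _)
    refine mem_erase.2 ⟨fun hwb => hcb (hwb ▸ Sym2.mem_mk_left c w), ?_⟩
    exact List.mem_toFinset.2 (h w hw)
  rw [card_erase_of_mem (List.mem_toFinset.2 hb)] at hle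
  have := l.toFinset_card_le
  have := List.length_pos_of_mem hb
  omega

end Neighbors

theorem card_image_range_le_of_forall_lt_eq {β : Type*} [DecidableEq β] {f : ℕ → β} {b : β} {m : ℕ}
    (hf : ∀ i < m, f i = b) (j : ℕ) : #((range j).image f) ≤ j - m + 1 := by
  calc #((range j).image f) ≤ #(insert b ((Ico m j).image f)) := by
        refine card_le_card fun x hx => ?_
        obtain ⟨i, hi, rfl⟩ := mem_image.1 hx
        by_cases him : i < m
        · exact hf i him ▸ mem_insert_self _ _
        · exact mem_insert_of_mem (mem_image_of_mem f (by simp at hi ⊢; omega))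
    _ ≤ #((Ico m j).image f) + 1 := card_insert_le _ _
    _ ≤ j - m + 1 := by gcongr; exact card_image_le.trans (by simp)

section CompleteBipartite

variable {V W : Type*}

theorem ncard_neighborSet_completeBipartiteGraph_inl (v : V) :
    ((completeBipartiteGraph V W).neighborSet (.inl v)).ncard = Nat.card W := by
  rw [show (completeBipartiteGraph V W).neighborSet (.inl v) = Set.range Sum.inr by
    ext (u | u) <;> simp, Set.ncard_range_of_injective Sum.inr_injective]

theorem ncard_neighborSet_completeBipartiteGraph_inr (w : W) :
    ((completeBipartiteGraph V W).neighborSet (.inr w)).ncard = Nat.card V := by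
  rw [show (completeBipartiteGraph V W).neighborSet (.inr w) = Set.range Sum.inl by
    ext (u | u) <;> simp, Set.ncard_range_of_injective Sum.inl_injective]

theorem completeBipartiteGraph_adj_or_adj (c : V ⊕ W) {a b : V ⊕ W}
    (h : (completeBipartiteGraph V W).Adj a b) :
    (completeBipartiteGraph V W).Adj c a ∨ (completeBipartiteGraph V W).Adj c b := by
  rcases a with a | a <;> rcases b with b | b <;> rcases c with c | c <;> simp_all

variable [Fintype V] [Fintype W]

theorem ncard_edgeSet_completeBipartiteGraph :
    (completeBipartiteGraph V W).edgeSet.ncard = Fintype.card V * Fintype.card W := by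
  rw [SimpleGraph.edgeSet_completeBipartiteGraph, Set.ncard_range_of_injective]
  · simp
  · rintro ⟨v, w⟩ ⟨v', w'⟩ h
    simpa using h

variable [DecidableEq V] [DecidableEq W]

theorem exists_fresh_edge (A : Finset (V × W)) (R : Finset (Sym2 (V ⊕ W)))
    (h : #R < (Fintype.card V - #(A.image Prod.fst)) * (Fintype.card W - #(A.image Prod.snd))) :
    ∃ x y, x ∉ A.image Prod.fst ∧ y ∉ A.image Prod.snd ∧ s(.inl x, .inr y) ∉ R := by
  let toEdge : V × W → Sym2 (V ⊕ W) := fun p => s(.inl p.1, .inr p.2)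
  have hinj : Injective toEdge := by
    rintro ⟨v, w⟩ ⟨v', w'⟩ h
    simpa [toEdge] using h
  let fresh := (univ \ A.image Prod.fst) ×ˢ (univ \ A.image Prod.snd)
  have hcard : #(fresh.image toEdge) = (Fintype.card V - #(A.image Prod.fst)) *
      (Fintype.card W - #(A.image Prod.snd)) := by
    rw [card_image_of_injective _ hinj, card_product, card_univ_sdiff, card_univ_sdiff]
  obtain ⟨e, he, heR⟩ := exists_mem_notMem_of_card_lt_card (hcard ▸ h)
  obtain ⟨⟨x, y⟩, hxy, rfl⟩ := mem_image.1 he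
  simp only [fresh, mem_product, mem_sdiff] at hxy
  exact ⟨x, y, hxy.1.2, hxy.2.2, heR⟩

theorem exists_fresh_edge_of_star {m n j : ℕ} (P : ℕ → V × W) {v₀ : V} {w₀ : W}
    (hside : (∀ i < m, (P i).1 = v₀) ∨ (∀ i < m, (P i).2 = w₀)) (R : Finset (Sym2 (V ⊕ W)))
    (hR : #R ≤ j) (hmj : m ≤ j) (hjn : j < m + n) (hV : 2 * m - 2 ≤ Fintype.card V)
    (hW : 2 * m - 2 ≤ Fintype.card W) (hnm : n + 3 ≤ m) :
    ∃ x y, (∀ i < j, (P i).1 ≠ x ∧ (P i).2 ≠ y) ∧ s(.inl x, .inr y) ∉ R := by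
  have hcount : #R < (Fintype.card V - #(((range j).image P).image Prod.fst)) *
      (Fintype.card W - #(((range j).image P).image Prod.snd)) := by
    -- The pairs use at most `n` values on the shared side and `m + n - 1` on the other.
    simp only [image_image]
    have hfst : #((range j).image (Prod.fst ∘ P)) ≤ j := card_image_le.trans (card_range j).le
    have hsnd : #((range j).image (Prod.snd ∘ P)) ≤ j := card_image_le.trans (card_range j).le
    rcases hside with h | h
    · have := card_image_range_le_of_forall_lt_eq (f := Prod.fst ∘ P) h j
      calc #R < (m + 1) * 2 := by omega
        _ ≤ _ := Nat.mul_le_mul (by omega) (by omega)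
    · have := card_image_range_le_of_forall_lt_eq (f := Prod.snd ∘ P) h j
      calc #R < 2 * (m + 1) := by omega
        _ ≤ _ := Nat.mul_le_mul (by omega) (by omega)
  obtain ⟨x, y, hx, hy, hR⟩ := exists_fresh_edge _ R hcount
  simp only [image_image, mem_image, mem_range, comp_apply, not_exists, not_and] at hx hy
  exact ⟨x, y, fun i hi => ⟨hx i hi, hy i hi⟩, hR⟩

end CompleteBipartite

section Strategy

variable {V W : Type*} [DecidableEq V] [DecidableEq W] (v₀ : V) (w₀ : W) {m n : ℕ}

/-- Alice grows her star at the endpoint of her first edge `s(inl v₀, inr w₀)` that Bob's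
first edge `b` misses. -/
def center (b : Sym2 (V ⊕ W)) : V ⊕ W := if .inl v₀ ∈ b then .inr w₀ else .inl v₀

theorem center_mem (b : Sym2 (V ⊕ W)) : center v₀ w₀ b ∈ s(.inl v₀, .inr w₀) := by
  unfold center
  split_ifs <;> simp

theorem center_notMem {b : Sym2 (V ⊕ W)} (hb : b ≠ s(.inl v₀, .inr w₀)) : center v₀ w₀ b ∉ b := by
  unfold center
  split_ifs with h
  · exact fun h' => hb ((Sym2.mem_and_mem_iff (by simp)).1 ⟨h, h'⟩)
  · exact h

/-- Entry `1` of the history `l` is Bob's first edge; the entries at even positions are Alice's. -/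
def IsPlannedMove (m : ℕ) (l : List (Sym2 (V ⊕ W))) (e : Sym2 (V ⊕ W)) : Prop :=
  (l = [] → e = s(.inl v₀, .inr w₀)) ∧
  (l.length < 2 * m → ∀ b ∈ l[1]?, center v₀ w₀ b ∈ e) ∧
  (2 * m ≤ l.length → ∀ i, ∀ a ∈ l[2 * i]?, ∀ u ∈ e, u ∉ a)

noncomputable def starMatchingStrategy (m : ℕ) : Strategy (V ⊕ W) :=
  Strategy.greedy (completeBipartiteGraph V W) (IsPlannedMove v₀ w₀ m) s(.inl v₀, .inr w₀)

variable {v₀ w₀} {σ τ : Strategy (V ⊕ W)}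

theorem center_mem_move {i : ℕ} (h₀ : IsPlannedMove v₀ w₀ m (hist σ τ 0) (move σ τ 0))
    (hi : IsPlannedMove v₀ w₀ m (hist σ τ (2 * i)) (move σ τ (2 * i))) (him : i < m) :
    center v₀ w₀ (move σ τ 1) ∈ move σ τ (2 * i) := by
  rcases i.eq_zero_or_pos with rfl | hi₀
  · exact h₀.1 rfl ▸ center_mem v₀ w₀ _
  · exact hi.2.1 (by simp [him]) _ (getElem?_hist (by omega))

variable [Fintype V] [Fintype W]

theorem exists_isPlannedMove_of_lt {j : ℕ} (hj : 0 < j) (hjm : j < m)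
    (h1 : move σ τ 1 ≠ s(.inl v₀, .inr w₀)) (hV : 2 * m - 2 ≤ Fintype.card V)
    (hW : 2 * m - 2 ≤ Fintype.card W) :
    ∃ e ∈ (completeBipartiteGraph V W).edgeSet, e ∉ hist σ τ (2 * j) ∧
      IsPlannedMove v₀ w₀ m (hist σ τ (2 * j)) e := by
  have hdeg : (hist σ τ (2 * j)).length ≤
      ((completeBipartiteGraph V W).neighborSet (center v₀ w₀ (move σ τ 1))).ncard := by
    unfold center
    split_ifs <;> simp [ncard_neighborSet_completeBipartiteGraph_inl,
      ncard_neighborSet_completeBipartiteGraph_inr] <;> omega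
  obtain ⟨w, hw, hwl⟩ :=
    exists_adj_notMem (mem_hist.2 ⟨1, by omega, rfl⟩) (center_notMem v₀ w₀ h1) hdeg
  refine ⟨_, hw, hwl, fun h => ?_, fun _ b hb => ?_, fun h => ?_⟩
  · exact absurd (congrArg List.length h) (by simp; omega)
  · rw [getElem?_hist (by omega), Option.mem_some_iff] at hb
    exact hb ▸ Sym2.mem_mk_left _ _
  · rw [length_hist] at h
    omega

theorem exists_isPlannedMove_of_le {j : ℕ} (hmj : m ≤ j) (hjn : j < m + n)
    (hV : 2 * m - 2 ≤ Fintype.card V) (hW : 2 * m - 2 ≤ Fintype.card W) (hnm : n + 3 ≤ m)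
    (hmove : ∀ i < j, move σ τ (2 * i) ∈ (completeBipartiteGraph V W).edgeSet)
    (hcenter : ∀ i < m, center v₀ w₀ (move σ τ 1) ∈ move σ τ (2 * i)) :
    ∃ e ∈ (completeBipartiteGraph V W).edgeSet, e ∉ hist σ τ (2 * j) ∧
      IsPlannedMove v₀ w₀ m (hist σ τ (2 * j)) e := by
  have hpair : ∀ i, ∃ p : V × W, i < j → move σ τ (2 * i) = s(.inl p.1, .inr p.2) := by
    intro i
    by_cases hi : i < j
    · obtain ⟨p, hp⟩ := SimpleGraph.edgeSet_completeBipartiteGraph ▸ hmove i hi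
      exact ⟨p, fun _ => hp.symm⟩
    · exact ⟨(v₀, w₀), fun h => absurd h hi⟩
  choose P hP using hpair
  have hside : (∀ i < m, (P i).1 = v₀) ∨ (∀ i < m, (P i).2 = w₀) := by
    unfold center at hcenter
    split_ifs at hcenter
    · exact .inr fun i hi => (by simpa [hP i (by omega)] using hcenter i hi : w₀ = _).symm
    · exact .inl fun i hi => (by simpa [hP i (by omega)] using hcenter i hi : v₀ = _).symm
  obtain ⟨x, y, hxy, hR⟩ := exists_fresh_edge_of_star P hside
    ((range j).image fun i => move σ τ (2 * i + 1)) (card_image_le.trans (card_range j).le)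
    hmj hjn hV hW hnm
  have hfresh : ∀ i < j, ∀ u ∈ s(.inl x, .inr y), u ∉ move σ τ (2 * i) := by
    intro i hi u hu
    rw [hP i hi]
    rcases Sym2.mem_iff.1 hu with rfl | rfl
    · simpa using fun h => (hxy i hi).1 h.symm
    · simpa using fun h => (hxy i hi).2 h.symm
  refine ⟨s(.inl x, .inr y), by simp, ?_, fun h => ?_, fun h => ?_, fun _ i a ha => ?_⟩
  · rw [mem_hist]
    rintro ⟨i, hi, he⟩
    obtain ⟨k, rfl | rfl⟩ := Nat.even_or_odd' i
    · exact hfresh k (by omega) _ (Sym2.mem_mk_left _ _) (he ▸ Sym2.mem_mk_left _ _)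
    · exact hR (mem_image.2 ⟨k, mem_range.2 (by omega), he⟩)
  · exact absurd (congrArg List.length h) (by simp; omega)
  · rw [length_hist] at h
    omega
  · by_cases hi : i < j
    · rw [getElem?_hist (by omega), Option.mem_some_iff] at ha
      exact ha ▸ hfresh i hi
    · simp [List.getElem?_eq_none (by simp; omega : (hist σ τ (2 * j)).length ≤ 2 * i)] at ha

end Strategy

section Upper

variable {V W : Type*} [Fintype V] [Fintype W] {m n : ℕ}

theorem two_mul_add_le_ncard_edgeSet (hV : 2 * m - 2 ≤ Fintype.card V)
    (hW : 2 * m - 2 ≤ Fintype.card W) (hnm : n + 3 ≤ m) :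
    2 * (m + n) ≤ (completeBipartiteGraph V W).edgeSet.ncard := by
  rw [ncard_edgeSet_completeBipartiteGraph]
  calc 2 * (m + n) ≤ 4 * (2 * m - 2) := by omega
    _ ≤ _ := Nat.mul_le_mul (by omega) hW

variable [DecidableEq V] [DecidableEq W] {v₀ : V} {w₀ : W} {τ : Strategy (V ⊕ W)}

theorem isPlannedMove_move (hτ : τ.Valid (completeBipartiteGraph V W))
    (hV : 2 * m - 2 ≤ Fintype.card V) (hW : 2 * m - 2 ≤ Fintype.card W) (hnm : n + 3 ≤ m) :
    ∀ j < m + n, IsPlannedMove v₀ w₀ m (hist (starMatchingStrategy v₀ w₀ m) τ (2 * j))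
      (move (starMatchingStrategy v₀ w₀ m) τ (2 * j)) := by
  have hσ := Strategy.greedy_valid (G := completeBipartiteGraph V W) (IsPlannedMove v₀ w₀ m)
    s(.inl v₀, .inr w₀)
  have hK := two_mul_add_le_ncard_edgeSet hV hW hnm
  intro j
  induction j using Nat.strong_induction_on with | _ j ih => ?_
  intro hj
  rw [move_two_mul]
  apply Strategy.greedy_spec
  rcases j.eq_zero_or_pos with rfl | hj₀
  · exact ⟨_, by simp, by simp [hist], fun _ => rfl, fun _ b hb => by simp [hist] at hb,
      fun h => by rw [length_hist] at h; omega⟩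
  have h₀ := ih 0 hj₀ (by omega)
  rcases lt_or_ge j m with hjm | hmj
  · refine exists_isPlannedMove_of_lt hj₀ hjm (fun h₁ => ?_) hV hW
    have := move_injOn hσ hτ (Set.mem_Iio.2 (by omega)) (Set.mem_Iio.2 (by omega))
      (h₁.trans (h₀.1 rfl).symm)
    omega
  · exact exists_isPlannedMove_of_le hmj hj hV hW hnm
      (fun i _ => move_mem_edgeSet hσ hτ (by omega))
      (fun i him => center_mem_move h₀ (ih i (by omega) (by omega)) him)

theorem hasCopy_starMatching_moves (hτ : τ.Valid (completeBipartiteGraph V W))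
    (hV : 2 * m - 2 ≤ Fintype.card V) (hW : 2 * m - 2 ≤ Fintype.card W) (hnm : n + 3 ≤ m) :
    HasCopy (starMatching m n)
      {e | ∃ i ≤ m + n - 1, e = move (starMatchingStrategy v₀ w₀ m) τ (2 * i)} := by
  have hσ := Strategy.greedy_valid (G := completeBipartiteGraph V W) (IsPlannedMove v₀ w₀ m)
    s(.inl v₀, .inr w₀)
  have hK := two_mul_add_le_ncard_edgeSet hV hW hnm
  have hplan := isPlannedMove_move (v₀ := v₀) (w₀ := w₀) hτ hV hW hnm
  refine (hasCopy_starMatching_of_edges _ (center v₀ w₀ (move _ τ 1)) (by omega)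
    (fun i _ => SimpleGraph.not_isDiag_of_mem_edgeSet _ (move_mem_edgeSet hσ hτ (by omega)))
    (fun i hi i' hi' h => ?_) (fun i hi => center_mem_move (hplan 0 (by omega))
      (hplan i (by omega)) hi) (fun j hj hmj u hu i hi => ?_)).mono ?_
  · have := move_injOn hσ hτ (Set.mem_Iio.2 (by have := Set.mem_Iio.1 hi; omega))
      (Set.mem_Iio.2 (by have := Set.mem_Iio.1 hi'; omega)) h
    omega
  · exact (hplan j hj).2.2 (by simp [hmj]) i _ (getElem?_hist (by omega)) u hu
  · rintro _ ⟨i, hi, rfl⟩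
    exact ⟨i, by omega, rfl⟩

theorem aliceWins_starMatching (hV : 2 * m - 2 ≤ Fintype.card V)
    (hW : 2 * m - 2 ≤ Fintype.card W) (hnm : n + 3 ≤ m) :
    AliceWins (starMatching m n) (completeBipartiteGraph V W) := by
  obtain ⟨v₀⟩ : Nonempty V := Fintype.card_pos_iff.1 (by omega)
  obtain ⟨w₀⟩ : Nonempty W := Fintype.card_pos_iff.1 (by omega)
  refine ⟨starMatchingStrategy v₀ w₀ m, Strategy.greedy_valid _ _, fun τ hτ =>
    ⟨m + n - 1, ?_, hasCopy_starMatching_moves hτ hV hW hnm, fun hred => ?_⟩⟩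
  · have := two_mul_add_le_ncard_edgeSet hV hW hnm
    omega
  · let red := (range (m + n - 1)).image fun i => move (starMatchingStrategy v₀ w₀ m) τ (2 * i + 1)
    have hred' : HasCopy (starMatching m n) (red : Set (Sym2 (V ⊕ W))) := by
      convert hred using 1
      ext
      simp [red, eq_comm]
    have := add_le_ncard_edgeSet_starMatching.trans
      (hred'.ncard_edgeSet_le.trans (card_image_le.trans (card_range _).le))
    omega

end Upper

theorem add_le_of_aliceWins_starMatching {m n N : ℕ}
    (h : AliceWins (starMatching m n) (completeBipartiteGraph (Fin N) (Fin N))) : m + n ≤ N := by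
  obtain ⟨c | c, hc⟩ := exists_add_le_ncard_neighborSet_of_hasCopy
    completeBipartiteGraph_adj_or_adj h.hasCopy_edgeSet
  · simpa [ncard_neighborSet_completeBipartiteGraph_inl] using hc
  · simpa [ncard_neighborSet_completeBipartiteGraph_inr] using hc

end AchievementGame

open AchievementGame

theorem stmt19_general (m n : ℕ) (hm : 5 ≤ m) (hnm : n ≤ m - 3) :
    (∀ N : ℕ, AliceWins (starMatching m n)
        (completeBipartiteGraph (Fin N) (Fin N)) → m + n ≤ N) ∧
    AliceWins (starMatching m n)
      (completeBipartiteGraph (Fin (2 * m - 2)) (Fin (2 * m - 2))) :=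
  ⟨fun _ => add_le_of_aliceWins_starMatching,
    aliceWins_starMatching (by simp) (by simp) (by omega)⟩

/-- Let `m, n` be integers with `m ≥ 5` and `1 ≤ n ≤ m − 3`. Then
`m + n ≤ ba(K_{1,m} ∪ nK₂) ≤ 2m − 2`: Alice has no winning strategy in
`(K_{1,m} ∪ nK₂, K_{N,N}, +)` for `N < m + n`, and Alice has a winning strategy in
`(K_{1,m} ∪ nK₂, K_{2m-2,2m-2}, +)`. -/
theorem stmt19 (m n : ℕ) (hm : 5 ≤ m) (hn : 1 ≤ n) (hnm : n ≤ m - 3) :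
    (∀ N : ℕ, AliceWins (starMatching m n)
        (completeBipartiteGraph (Fin N) (Fin N)) → m + n ≤ N) ∧
    AliceWins (starMatching m n)
      (completeBipartiteGraph (Fin (2 * m - 2)) (Fin (2 * m - 2))) :=
  stmt19_general m n hm hnm
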